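/- (Core step of the first-round converse.) Let F be a finite field with q elements and L, L_X natural numbers. Let Ω be a probability space carrying random variables W : Ω → F^L uniformly distributed, and (Z, V) (valued in arbitrary finite types) such that the pair (Z, V) is independent of W. Suppose X = f(W, Z) for some function f with values in F^{L_X}, and suppose there exists a function g such that g(X, V) = W almost surely. Then L_X ≥ L. -/

import Mathlib

open MeasureTheory Finset
open scoped ENNReal

/-- Two (discrete) random tuples `f` and `g` are statistically independent:
the joint law of `(f, g)` is the product of the marginal laws, expressed pointwise. -/
def IndepRV {Ω A B : Type*} [MeasurableSpace Ω] (P : Measure Ω)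
    (f : Ω → A) (g : Ω → B) : Prop :=
  ∀ (a : A) (b : B), P (f ⁻¹' {a} ∩ g ⁻¹' {b}) = P (f ⁻¹' {a}) * P (g ⁻¹' {b})

/-- A finite family of (discrete) random variables is mutually independent:
the joint law factorizes as the product of the marginals, expressed pointwise. -/
def iIndepRV {Ω ι : Type*} [Fintype ι] {A : ι → Type*} [MeasurableSpace Ω]
    (P : Measure Ω) (f : ∀ i, Ω → A i) : Prop :=
  ∀ a : ∀ i, A i, P (⋂ i, f i ⁻¹' {a i}) = ∏ i, P (f i ⁻¹' {a i})

/-- A random variable valued in a finite type is uniformly distributed. -/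
def UniformRV {Ω A : Type*} [Fintype A] [MeasurableSpace Ω] (P : Measure Ω)
    (f : Ω → A) : Prop :=
  ∀ a : A, P (f ⁻¹' {a}) = (Fintype.card A : ℝ≥0∞)⁻¹

/-!
Fix a value `(z, v)` taken by `(Z, V)` with positive probability. On that event `W` is almost
surely one of the messages `w` with `g (f w z) v = w`; by independence `W` is still uniform there,
so these messages exhaust all of `F^L`. On the other hand `f (·, z)` is injective on them, so
`|F|^L ≤ |F|^{L_X}`.
-/

lemma exists_measure_preimage_singleton_ne_zero {Ω B : Type*} [MeasurableSpace Ω] [Countable B]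
    (P : Measure Ω) [NeZero P] (Y : Ω → B) : ∃ b, P (Y ⁻¹' {b}) ≠ 0 := by
  have hcover : ⋃ b, Y ⁻¹' {b} = Set.univ := by
    rw [← Set.preimage_iUnion, Set.iUnion_of_singleton, Set.preimage_univ]
  obtain ⟨b, hb⟩ := exists_measure_pos_of_not_measure_iUnion_null (μ := P)
    (by rw [hcover]; exact NeZero.ne (P Set.univ))
  exact ⟨b, hb.ne'⟩

lemma card_le_card_of_ae_mem_of_indep {Ω A B : Type*} [MeasurableSpace Ω] [Fintype A]
    (P : Measure Ω) [IsFiniteMeasure P] {W : Ω → A} {Y : Ω → B} (hunif : UniformRV P W)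
    (hindep : IndepRV P W Y) {b : B} (hb : P (Y ⁻¹' {b}) ≠ 0) (S : Finset A)
    (hS : ∀ᵐ ω ∂P, Y ω = b → W ω ∈ S) : Fintype.card A ≤ S.card := by
  rcases (Fintype.card A).eq_zero_or_pos with hA | hA
  · simp [hA]
  set E := Y ⁻¹' {b}
  have hcover : E ≤ᵐ[P] ⋃ w ∈ S, W ⁻¹' {w} ∩ E := by
    filter_upwards [hS] with ω hω hωE
    exact Set.mem_biUnion (hω hωE) ⟨rfl, hωE⟩
  have hbound : P E ≤ (S.card * (Fintype.card A : ℝ≥0∞)⁻¹) * P E :=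
    calc P E ≤ ∑ w ∈ S, P (W ⁻¹' {w} ∩ E) :=
          (measure_mono_ae hcover).trans (measure_biUnion_finset_le S _)
      _ = ∑ _w ∈ S, (Fintype.card A : ℝ≥0∞)⁻¹ * P E :=
          sum_congr rfl fun w _ => by rw [hindep w b, hunif w]
      _ = S.card * (Fintype.card A : ℝ≥0∞)⁻¹ * P E := by
          rw [sum_const, nsmul_eq_mul, mul_assoc]
  have hratio : 1 ≤ (S.card / Fintype.card A : ℝ≥0∞) := by
    refine (ENNReal.mul_le_mul_iff_left hb (measure_ne_top P E)).1 ?_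
    rwa [one_mul, div_eq_mul_inv]
  rw [ENNReal.le_div_iff_mul_le (.inl (Nat.cast_ne_zero.2 hA.ne'))
    (.inl (ENNReal.natCast_ne_top _)), one_mul] at hratio
  exact_mod_cast hratio

lemma card_filter_apply_apply_eq_self_le {α β : Type*} [Fintype α] [Fintype β] [DecidableEq α]
    (f : α → β) (g : β → α) : (univ.filter fun a => g (f a) = a).card ≤ Fintype.card β := by
  refine card_le_card_of_injOn f (fun a _ => mem_coe.2 (mem_univ _)) ?_
  intro a₁ h₁ a₂ h₂ he
  rw [← (mem_filter.1 h₁).2, ← (mem_filter.1 h₂).2, he]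

theorem first_round_converse_core_general
    (F : Type) [Field F] [Fintype F] (L LX : ℕ)
    (Ω : Type) [MeasurableSpace Ω] (P : Measure Ω) [IsProbabilityMeasure P]
    (Zt Vt : Type) [Fintype Zt] [Fintype Vt]
    (W : Ω → (Fin L → F)) (Z : Ω → Zt) (V : Ω → Vt)
    (hunifW : UniformRV P W)
    (hindep : IndepRV P W (fun ω => (Z ω, V ω)))
    (f : (Fin L → F) → Zt → (Fin LX → F))
    (g : (Fin LX → F) → Vt → (Fin L → F))
    (hg : ∀ᵐ ω ∂P, g (f (W ω) (Z ω)) (V ω) = W ω) :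
    L ≤ LX := by
  classical
  obtain ⟨⟨z, v⟩, hzv⟩ := exists_measure_preimage_singleton_ne_zero P fun ω => (Z ω, V ω)
  set decodable := univ.filter fun w => g (f w z) v = w
  have hall : Fintype.card (Fin L → F) ≤ decodable.card := by
    refine card_le_card_of_ae_mem_of_indep P hunifW hindep hzv decodable ?_
    filter_upwards [hg] with ω hω hωzv
    obtain ⟨rfl, rfl⟩ := Prod.mk.inj hωzv
    simpa [decodable] using hω
  have hpow : Fintype.card F ^ L ≤ Fintype.card F ^ LX := by
    simpa using hall.trans (card_filter_apply_apply_eq_self_le (f · z) (g · v))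
  exact (Nat.pow_le_pow_iff_right Fintype.one_lt_card).1 hpow

/-- **Core step of the first-round converse.**
Let `W : Ω → F^L` be uniform and let the pair `(Z, V)` (valued in finite types) be
independent of `W`. If `X = f (W, Z) ∈ F^{L_X}` and some decoder `g` satisfies
`g (X, V) = W` almost surely, then `L_X ≥ L`. -/
theorem first_round_converse_core
    (F : Type) [Field F] [Fintype F] (q L LX : ℕ) (hq : Fintype.card F = q)
    (Ω : Type) [MeasurableSpace Ω] (P : Measure Ω) [IsProbabilityMeasure P]
    (Zt Vt : Type) [Fintype Zt] [Fintype Vt]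
    (W : Ω → (Fin L → F)) (Z : Ω → Zt) (V : Ω → Vt)
    (hunifW : UniformRV P W)
    (hindep : IndepRV P W (fun ω => (Z ω, V ω)))
    (f : (Fin L → F) → Zt → (Fin LX → F))
    (g : (Fin LX → F) → Vt → (Fin L → F))
    (hg : ∀ᵐ ω ∂P, g (f (W ω) (Z ω)) (V ω) = W ω) :
    L ≤ LX :=
  first_round_converse_core_general F L LX Ω P Zt Vt W Z V hunifW hindep f g hg
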